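/- arXiv:1706.02903 — 3 statements merged into one kernel-verified Lean document; each statement's English description precedes it below -/
import Mathlib

section
/- For c > 0 and μ > 0, the boundary value problem −v_xx − μ v_yy + c v = 0 on the strip [0,1)×(−ε,ε) with periodic boundary conditions in x, homogeneous Neumann condition v_y(x,−ε) = 0, and perturbed Neumann condition v_y(x,ε) = α ∂ᵏv/∂xᵏ(x,ε) with k an odd positive integer, has only the trivial solution v ≡ 0, provided α ≠ 0 restricted to Fourier modes: for each frequency ω ∈ 2πℤ, the Fourier-transformed two-point boundary value problem μ φ'' = (ω² + c)φ with φ'(−ε)=0 and φ'(ε) = α(iω)ᵏ φ(ε) has only the trivial solution. -/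
/-!
Multiplying `μ φ'' = (ω² + c) φ` by `conj φ` and integrating by parts over
`[-ε, ε]` gives
`∫ (ω² + c) |φ|² + μ |φ'|² = Re (μ φ'(ε) conj φ(ε)) - Re (μ φ'(-ε) conj φ(-ε))`.
The boundary term at `-ε` vanishes, and the one at `ε` equals `μ α |φ(ε)|² Re ((iω)^k) = 0`
because `(iω)^k` is purely imaginary for odd `k`. The integrand is nonnegative and continuous,
with `|φ|²` weighted by `ω² + c > 0`, so `φ` vanishes on `[-ε, ε]`.
-/

open Complex ComplexConjugate

theorem Complex.re_I_mul_ofReal_pow_of_odd {k : ℕ} (hk : Odd k) (x : ℝ) :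
    ((I * x) ^ k).re = 0 := by
  obtain ⟨m, rfl⟩ := hk
  rw [mul_pow, pow_succ, pow_mul, I_sq, ← ofReal_pow]
  rcases neg_one_pow_eq_or ℂ m with h | h <;> simp [h, -ofReal_pow]

theorem hasDerivAt_re_mul_conj {f g : ℝ → ℂ} {f' g' : ℂ} {y : ℝ}
    (hf : HasDerivAt f f' y) (hg : HasDerivAt g g' y) :
    HasDerivAt (fun y => (f y * conj (g y)).re) (f' * conj (g y) + f y * conj g').re y :=
  reCLM.hasFDerivAt.comp_hasDerivAt y (hf.mul hg.star)

theorem integral_energy_eq_of_mul_deriv_deriv_eq {φ : ℝ → ℂ} (hφ : ContDiff ℝ 2 φ)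
    {a b μ ν : ℝ} (hab : a ≤ b)
    (heq : ∀ y ∈ Set.Icc a b, (μ : ℂ) * deriv (deriv φ) y = (ν : ℂ) * φ y) :
    ∫ y in a..b, (ν * ‖φ y‖ ^ 2 + μ * ‖deriv φ y‖ ^ 2) =
      μ * ((deriv φ b * conj (φ b)).re - (deriv φ a * conj (φ a)).re) := by
  have hφ1 : Differentiable ℝ φ := hφ.differentiable (by norm_num)
  have hφ2 : ContDiff ℝ 1 (deriv φ) := hφ.iterate_deriv' 1 1
  have hφ2d : Differentiable ℝ (deriv φ) := hφ2.differentiable one_ne_zero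
  have hderiv : ∀ y ∈ Set.uIcc a b,
      HasDerivAt (fun y => μ * (deriv φ y * conj (φ y)).re)
        (ν * ‖φ y‖ ^ 2 + μ * ‖deriv φ y‖ ^ 2) y := by
    intro y hy
    rw [Set.uIcc_of_le hab] at hy
    refine ((hasDerivAt_re_mul_conj (hφ2d y).hasDerivAt (hφ1 y).hasDerivAt).const_mul μ)
      |>.congr_deriv ?_
    rw [← re_ofReal_mul, mul_add, ← mul_assoc, heq y hy, mul_assoc, mul_conj', mul_conj']
    norm_cast
  rw [intervalIntegral.integral_eq_sub_of_hasDerivAt hderiv, mul_sub]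
  exact (by fun_prop : Continuous fun y => ν * ‖φ y‖ ^ 2 + μ * ‖deriv φ y‖ ^ 2)
    |>.intervalIntegrable _ _

theorem eq_zero_of_integral_eq_zero_of_nonneg {f : ℝ → ℝ} {a b : ℝ} (hab : a < b)
    (hf : ContinuousOn f (Set.Icc a b)) (hf₀ : ∀ x ∈ Set.Icc a b, 0 ≤ f x)
    (hint : ∫ x in a..b, f x = 0) : ∀ x ∈ Set.Icc a b, f x = 0 := by
  intro x hx
  by_contra hfx
  refine (intervalIntegral.integral_pos hab hf (fun y hy => hf₀ y (Set.Ioc_subset_Icc_self hy))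
    ⟨x, hx, lt_of_le_of_ne (hf₀ x hx) (Ne.symm hfx)⟩).ne' hint

theorem odd_perturbation_only_trivial_solution_general
    (ε c μ α : ℝ) (hε : 0 < ε) (hc : 0 < c) (hμ : 0 < μ)
    (k : ℕ) (hk : Odd k)
    (ω : ℝ)
    (φ : ℝ → ℂ) (hφ : ContDiff ℝ 2 φ)
    (heq : ∀ y ∈ Set.Icc (-ε) ε,
      (μ : ℂ) * deriv (deriv φ) y = ((ω ^ 2 + c : ℝ) : ℂ) * φ y)
    (hbc1 : deriv φ (-ε) = 0)
    (hbc2 : deriv φ ε = (α : ℂ) * (Complex.I * (ω : ℂ)) ^ k * φ ε) :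
    ∀ y ∈ Set.Icc (-ε) ε, φ y = 0 := by
  have hν : 0 < ω ^ 2 + c := by positivity
  have hboundary : (deriv φ ε * conj (φ ε)).re = 0 := by
    rw [hbc2, mul_assoc, mul_conj', mul_right_comm, ← ofReal_pow, ← ofReal_mul, re_ofReal_mul,
      re_I_mul_ofReal_pow_of_odd hk, mul_zero]
  have henergy := integral_energy_eq_of_mul_deriv_deriv_eq hφ (by linarith) heq
  rw [hboundary, hbc1, zero_mul, zero_re, sub_zero, mul_zero] at henergy
  have hcont : Continuous fun y => (ω ^ 2 + c) * ‖φ y‖ ^ 2 + μ * ‖deriv φ y‖ ^ 2 := by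
    have := hφ.continuous_deriv one_le_two
    fun_prop
  intro y hy
  have hy₀ := eq_zero_of_integral_eq_zero_of_nonneg (by linarith) hcont.continuousOn
    (fun x _ => by positivity) henergy y hy
  have : (ω ^ 2 + c) * ‖φ y‖ ^ 2 = 0 := by
    linarith [mul_nonneg hν.le (sq_nonneg ‖φ y‖), mul_nonneg hμ.le (sq_nonneg ‖deriv φ y‖)]
  simpa [hν.ne'] using this

/-- For `c > 0`, `μ > 0`, odd `k`, and any Fourier frequency `ω ∈ 2πℤ`, the
Fourier-transformed two-point boundary value problem `μ φ'' = (ω² + c) φ` on `[-ε,ε]`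
with `φ'(-ε) = 0` and `φ'(ε) = α (iω)^k φ(ε)` has only the trivial solution. -/
theorem odd_perturbation_only_trivial_solution
    (ε c μ α : ℝ) (hε : 0 < ε) (hc : 0 < c) (hμ : 0 < μ)
    (k : ℕ) (hk : Odd k) (hk0 : 0 < k)
    (ω : ℝ) (hω : ∃ n : ℤ, ω = 2 * Real.pi * n)
    (φ : ℝ → ℂ) (hφ : ContDiff ℝ 2 φ)
    (heq : ∀ y ∈ Set.Icc (-ε) ε,
      (μ : ℂ) * deriv (deriv φ) y = ((ω ^ 2 + c : ℝ) : ℂ) * φ y)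
    (hbc1 : deriv φ (-ε) = 0)
    (hbc2 : deriv φ ε = (α : ℂ) * (Complex.I * (ω : ℂ)) ^ k * φ ε) :
    ∀ y ∈ Set.Icc (-ε) ε, φ y = 0 :=
  odd_perturbation_only_trivial_solution_general ε c μ α hε hc hμ k hk ω φ hφ heq hbc1 hbc2
end

section
/- The function v(x,y,t) = e^{st+iωx}(e^{κy} + e^{−κ(y+2ε)}) solves the equation v_t = v_xx + v_yy − v on ℝ×(−ε,ε) with boundary conditions v_y(x,−ε,t) = 0 and v_y(x,ε,t) = −v_xx(x,ε,t) if and only if s = κ² − ω² − 1 and κ tanh(2κε) = ω². -/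
noncomputable def waveMode (ε κ ω s : ℝ) (x y t : ℝ) : ℂ :=
  Complex.exp ((s : ℂ) * t + Complex.I * ω * x) *
    (Complex.exp ((κ : ℂ) * y) + Complex.exp (-(κ : ℂ) * (y + 2 * ε)))

/-!
Since `e^{κy} + e^{−κ(y+2ε)} = 2e^{−κε} cosh(κ(y+ε))`, the mode separates as
`v = 2e^{−κε} e^{st+iωx} cosh(κ(y+ε))`, so `v_t = s v`, `v_xx = −ω² v` and `v_yy = κ² v`.
The equation then reads `(s − κ² + ω² + 1) v = 0`, and `v ≠ 0` (e.g. at `y = −ε`).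
Further `v_y ∝ κ sinh(κ(y+ε))` vanishes at `y = −ε`, and at `y = ε` the boundary condition
becomes `κ sinh(2κε) = ω² cosh(2κε)`, i.e. `κ tanh(2κε) = ω²` as `cosh > 0`.
-/

open Complex

theorem iteratedDeriv_two_eq_of_hasDerivAt {𝕜 F : Type*} [NontriviallyNormedField 𝕜]
    [NormedAddCommGroup F] [NormedSpace 𝕜 F] {f g : 𝕜 → F} {g' : F} {u : 𝕜}
    (hf : ∀ v, HasDerivAt f (g v) v) (hg : HasDerivAt g g' u) : iteratedDeriv 2 f u = g' := by
  rw [iteratedDeriv_succ, iteratedDeriv_one, funext fun v => (hf v).deriv, hg.deriv]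

theorem Real.mul_sinh_eq_mul_cosh_iff (a b x : ℝ) :
    a * Real.sinh x = b * Real.cosh x ↔ a * Real.tanh x = b := by
  rw [Real.tanh_eq_sinh_div_cosh, mul_div_assoc', div_eq_iff (Real.cosh_pos x).ne']

section

variable (ε κ ω s x y t : ℝ)

theorem waveMode_eq_cosh : waveMode ε κ ω s x y t =
    2 * cexp (-(κ * ε)) * cexp (s * t + I * ω * x) * cosh (κ * (y + ε)) := by
  have : cexp (-(κ * ε)) * (2 * cosh (κ * (y + ε))) = cexp (κ * y) + cexp (-κ * (y + 2 * ε)) := by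
    rw [two_cosh, mul_add, ← Complex.exp_add, ← Complex.exp_add]
    ring_nf
  rw [waveMode, ← this]
  ring

theorem hasDerivAt_waveMode_t :
    HasDerivAt (fun t => waveMode ε κ ω s x y t) (s * waveMode ε κ ω s x y t) t := by
  refine ((((hasDerivAt_id' (t : ℂ)).const_mul (s : ℂ)).add_const (I * ω * x)).cexp.mul_const
    (cexp (κ * y) + cexp (-κ * (y + 2 * ε)))).comp_ofReal.congr_deriv ?_
  simp only [waveMode]
  ring

theorem hasDerivAt_waveMode_x :
    HasDerivAt (fun x => waveMode ε κ ω s x y t) (I * ω * waveMode ε κ ω s x y t) x := by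
  refine ((((hasDerivAt_id' (x : ℂ)).const_mul (I * ω)).const_add (s * t : ℂ)).cexp.mul_const
    (cexp (κ * y) + cexp (-κ * (y + 2 * ε)))).comp_ofReal.congr_deriv ?_
  simp only [waveMode]
  ring

theorem hasDerivAt_waveMode_y :
    HasDerivAt (fun y => waveMode ε κ ω s x y t)
      (2 * cexp (-(κ * ε)) * cexp (s * t + I * ω * x) * (κ * sinh (κ * (y + ε)))) y := by
  simp only [waveMode_eq_cosh]
  refine ((((hasDerivAt_id' (y : ℂ)).add_const (ε : ℂ)).const_mul (κ : ℂ)).ccosh.const_mul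
    (2 * cexp (-(κ * ε)) * cexp (s * t + I * ω * x))).comp_ofReal.congr_deriv ?_
  ring

theorem deriv_waveMode_t : deriv (fun t => waveMode ε κ ω s x y t) t = s * waveMode ε κ ω s x y t :=
  (hasDerivAt_waveMode_t ε κ ω s x y t).deriv

theorem deriv_waveMode_y : deriv (fun y => waveMode ε κ ω s x y t) y =
    2 * cexp (-(κ * ε)) * cexp (s * t + I * ω * x) * (κ * sinh (κ * (y + ε))) :=
  (hasDerivAt_waveMode_y ε κ ω s x y t).deriv

theorem iteratedDeriv_two_waveMode_x :
    iteratedDeriv 2 (fun x => waveMode ε κ ω s x y t) x = -ω ^ 2 * waveMode ε κ ω s x y t := by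
  rw [iteratedDeriv_two_eq_of_hasDerivAt (fun x => hasDerivAt_waveMode_x ε κ ω s x y t)
    ((hasDerivAt_waveMode_x ε κ ω s x y t).const_mul (I * ω))]
  linear_combination (ω : ℂ) ^ 2 * waveMode ε κ ω s x y t * I_sq

theorem iteratedDeriv_two_waveMode_y :
    iteratedDeriv 2 (fun y => waveMode ε κ ω s x y t) y = κ ^ 2 * waveMode ε κ ω s x y t := by
  rw [iteratedDeriv_two_eq_of_hasDerivAt (fun y => hasDerivAt_waveMode_y ε κ ω s x y t)
    ((((hasDerivAt_id' (y : ℂ)).add_const (ε : ℂ)).const_mul (κ : ℂ)).csinh.const_mul (κ : ℂ)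
      |>.const_mul (2 * cexp (-(κ * ε)) * cexp (s * t + I * ω * x)) |>.comp_ofReal),
    waveMode_eq_cosh]
  ring

end

section

variable {ε κ ω s : ℝ}

theorem waveMode_pde_iff (hε : 0 ≤ ε) :
    (∀ x t : ℝ, ∀ y ∈ Set.Icc (-ε) ε,
        deriv (fun t' => waveMode ε κ ω s x y t') t =
          iteratedDeriv 2 (fun x' => waveMode ε κ ω s x' y t) x +
            iteratedDeriv 2 (fun y' => waveMode ε κ ω s x y' t) y -
              waveMode ε κ ω s x y t) ↔
      s = κ ^ 2 - ω ^ 2 - 1 := by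
  simp only [deriv_waveMode_t, iteratedDeriv_two_waveMode_x, iteratedDeriv_two_waveMode_y]
  constructor
  · intro h
    have hv : waveMode ε κ ω s 0 (-ε) 0 ≠ 0 := by simp [waveMode_eq_cosh, Complex.exp_ne_zero]
    have : (s : ℂ) * waveMode ε κ ω s 0 (-ε) 0 =
        (κ ^ 2 - ω ^ 2 - 1 : ℝ) * waveMode ε κ ω s 0 (-ε) 0 := by
      rw [h 0 0 (-ε) ⟨le_rfl, by linarith⟩]
      push_cast
      ring
    exact_mod_cast mul_right_cancel₀ hv this
  · rintro rfl x t y -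
    push_cast
    ring

theorem deriv_waveMode_y_at_neg (x t : ℝ) : deriv (fun y => waveMode ε κ ω s x y t) (-ε) = 0 := by
  simp [deriv_waveMode_y]

theorem waveMode_boundary_iff :
    (∀ x t : ℝ, deriv (fun y => waveMode ε κ ω s x y t) ε =
        -iteratedDeriv 2 (fun x' => waveMode ε κ ω s x' ε t) x) ↔
      κ * Real.tanh (2 * κ * ε) = ω ^ 2 := by
  simp only [deriv_waveMode_y, iteratedDeriv_two_waveMode_x]
  simp only [waveMode_eq_cosh, show (κ : ℂ) * (ε + ε) = 2 * κ * ε by ring]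
  have hcast : (κ : ℂ) * sinh (2 * κ * ε) = ω ^ 2 * cosh (2 * κ * ε) ↔
      κ * Real.sinh (2 * κ * ε) = ω ^ 2 * Real.cosh (2 * κ * ε) := by
    exact_mod_cast Iff.rfl
  rw [← Real.mul_sinh_eq_mul_cosh_iff, ← hcast]
  have hA : 2 * cexp (-(κ * ε)) * cexp (s * 0 + I * ω * 0) ≠ 0 := by simp [Complex.exp_ne_zero]
  constructor
  · intro h
    exact mul_left_cancel₀ hA (by linear_combination h 0 0)
  · intro h x t
    linear_combination 2 * cexp (-(κ * ε)) * cexp (s * t + I * ω * x) * h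

end

/-- `v(x,y,t) = e^{st+iωx}(e^{κy} + e^{−κ(y+2ε)})` solves `v_t = v_xx + v_yy − v` on
`ℝ×(−ε,ε)` with `v_y(x,−ε,t) = 0` and `v_y(x,ε,t) = −v_xx(x,ε,t)` if and only if
`s = κ² − ω² − 1` and `κ tanh(2κε) = ω²`. -/
theorem waveMode_solves_iff (ε κ ω s : ℝ) (hε : 0 < ε) :
    ((∀ x t : ℝ, ∀ y ∈ Set.Icc (-ε) ε,
        deriv (fun t' => waveMode ε κ ω s x y t') t =
          iteratedDeriv 2 (fun x' => waveMode ε κ ω s x' y t) x +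
            iteratedDeriv 2 (fun y' => waveMode ε κ ω s x y' t) y -
              waveMode ε κ ω s x y t) ∧
      (∀ x t : ℝ, deriv (fun y => waveMode ε κ ω s x y t) (-ε) = 0) ∧
      (∀ x t : ℝ, deriv (fun y => waveMode ε κ ω s x y t) ε =
        -iteratedDeriv 2 (fun x' => waveMode ε κ ω s x' ε t) x)) ↔
    (s = κ ^ 2 - ω ^ 2 - 1 ∧ κ * Real.tanh (2 * κ * ε) = ω ^ 2) := by
  rw [waveMode_pde_iff hε.le, waveMode_boundary_iff]
  simp only [deriv_waveMode_y_at_neg, implies_true, true_and]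
end

section
/- For the wave-equation boundary eigenvalue condition with even k: the equation κ tanh(2κε) = α̃ωᵏ (with α̃ = αiᵏ real) admits a positive real solution κ for each ω ≠ 0 when α̃ > 0, and in that case s = (κ² − ω²)^{1/2} is real and positive whenever κ > |ω|; conversely if α̃ < 0 every solution κ is purely imaginary, so s² = κ² − ω² ≤ −ω² and s is purely imaginary, hence the mode e^{st} does not grow. -/
/-!
For `α̃ > 0` the map `κ ↦ κ tanh(2κε)` on `[0, ∞)` is continuous, vanishes at `0` and grows at
least linearly, so the intermediate value theorem gives a positive root.

For `α̃ < 0`, write `w = 2εκ`; the equation reads `κ sinh w = c cosh w` with `c = α̃ωᵏ < 0`. Multiplying by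
`conj (κ cosh w)` and taking real parts, using `Re (sinh w · conj (cosh w)) = sinh (2 Re w) / 2`,
gives `|κ|² sinh (4ε Re κ) / 2 = c |cosh w|² Re κ`. After multiplying by `Re κ` the left side is
nonnegative and the right side is `c |cosh w|² (Re κ)² ≤ 0`, so `Re κ = 0`.
-/

open ComplexConjugate Filter Set

namespace Real

theorem tanh_pos {x : ℝ} (hx : 0 < x) : 0 < tanh x := by
  rw [tanh_eq_sinh_div_cosh]
  exact div_pos (sinh_pos_iff.2 hx) (cosh_pos x)

theorem tanh_le_tanh {x y : ℝ} (hxy : x ≤ y) : tanh x ≤ tanh y := by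
  rw [tanh_eq_sinh_div_cosh, tanh_eq_sinh_div_cosh, div_le_div_iff₀ (cosh_pos x) (cosh_pos y)]
  have := sinh_nonneg_iff.2 (sub_nonneg.2 hxy)
  rw [sinh_sub] at this
  linarith

@[fun_prop]
theorem continuous_tanh : Continuous tanh := by
  simp only [funext tanh_eq_sinh_div_cosh]
  exact continuous_sinh.div continuous_cosh fun x => (cosh_pos x).ne'

theorem tendsto_mul_tanh_mul_atTop {a : ℝ} (ha : 0 < a) :
    Tendsto (fun x => x * tanh (a * x)) atTop atTop := by
  refine tendsto_atTop_mono' atTop ?_ (tendsto_id.atTop_mul_const (tanh_pos ha))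
  filter_upwards [eventually_ge_atTop 1] with x hx
  exact mul_le_mul_of_nonneg_left (tanh_le_tanh (le_mul_of_one_le_right ha.le hx))
    (zero_le_one.trans hx)

theorem exists_pos_mul_tanh_mul_eq {a t : ℝ} (ha : 0 < a) (ht : 0 < t) :
    ∃ x, 0 < x ∧ x * tanh (a * x) = t := by
  have hcont : ContinuousOn (fun x => x * tanh (a * x)) (Ici 0) := by fun_prop
  obtain ⟨x, hx0, hx⟩ := intermediate_value_Ici hcont (tendsto_mul_tanh_mul_atTop ha)
    (show t ∈ Ici (0 * tanh (a * 0)) by simpa using ht.le)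
  refine ⟨x, lt_of_le_of_ne hx0 ?_, hx⟩
  rintro rfl
  simp [ht.ne] at hx

theorem mul_sinh_mul_self_nonneg {a : ℝ} (ha : 0 ≤ a) (x : ℝ) : 0 ≤ x * sinh (a * x) := by
  rcases le_total 0 x with hx | hx
  · exact mul_nonneg hx (sinh_nonneg_iff.2 (mul_nonneg ha hx))
  · exact mul_nonneg_of_nonpos_of_nonpos hx
      (sinh_nonpos_iff.2 (mul_nonpos_of_nonneg_of_nonpos ha hx))

end Real

namespace Complex

theorem re_sinh_mul_conj_cosh (z : ℂ) :
    (sinh z * conj (cosh z)).re = Real.sinh (2 * z.re) / 2 := by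
  have h : sinh z * conj (cosh z) = (sinh (z + conj z) + sinh (z - conj z)) / 2 := by
    rw [← cosh_conj, sinh_add, sinh_sub]; ring
  rw [h, add_conj, sub_conj, sinh_mul_I]
  simp only [add_re, div_ofNat_re, sinh_ofReal_re, mul_I_re, sin_ofReal_im, neg_zero, add_zero]

theorem re_eq_zero_of_mul_tanh_mul_eq_neg {a c : ℝ} (ha : 0 < a) (hc : c < 0) {z : ℂ}
    (h : z * tanh (a * z) = c) : z.re = 0 := by
  set w := (a : ℂ) * z
  have hcosh : cosh w ≠ 0 := by
    intro h0
    rw [tanh_eq_sinh_div_cosh, h0, div_zero, mul_zero, eq_comm, ofReal_eq_zero] at h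
    exact hc.ne h
  have hsinh : z * sinh w = c * cosh w := by
    rw [tanh_eq_sinh_div_cosh, mul_div_assoc', div_eq_iff hcosh] at h
    exact h
  have hconj :
      (normSq z : ℂ) * (sinh w * conj (cosh w)) = (c * normSq (cosh w) : ℝ) * conj z := by
    push_cast
    rw [normSq_eq_conj_mul_self, normSq_eq_conj_mul_self]
    linear_combination conj z * conj (cosh w) * hsinh
  have hre := congrArg re hconj
  rw [re_ofReal_mul, re_ofReal_mul, re_sinh_mul_conj_cosh, conj_re] at hre
  have hw : w.re = a * z.re := re_ofReal_mul a z
  rw [hw, ← mul_assoc] at hre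
  have hlhs : 0 ≤ z.re * (normSq z * (Real.sinh (2 * a * z.re) / 2)) := by
    have := Real.mul_sinh_mul_self_nonneg (by positivity : 0 ≤ 2 * a) z.re
    have := normSq_nonneg z
    nlinarith
  have hrhs : 0 ≤ c * normSq (cosh w) * z.re ^ 2 := by
    rw [sq, ← mul_assoc, ← hre, mul_comm]
    exact hlhs
  have hcN : c * normSq (cosh w) < 0 := mul_neg_of_neg_of_pos hc (normSq_pos.2 hcosh)
  exact pow_eq_zero_iff two_ne_zero |>.1 (le_antisymm (by nlinarith) (sq_nonneg _))

end Complex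

theorem wave_even_perturbation_stability_dichotomy_general
    (ε ω α' : ℝ) (hε : 0 < ε) (hω : ω ≠ 0) (k : ℕ) (hk : Even k) :
    (0 < α' → ∃ κ : ℝ, 0 < κ ∧ κ * Real.tanh (2 * κ * ε) = α' * ω ^ k ∧
      (|ω| < κ → 0 < Real.sqrt (κ ^ 2 - ω ^ 2))) ∧
    (α' < 0 → ∀ κ : ℂ, κ * Complex.tanh (2 * κ * ε) = ((α' * ω ^ k : ℝ) : ℂ) →
      κ.re = 0 ∧ (κ ^ 2 - (ω : ℂ) ^ 2).im = 0 ∧ (κ ^ 2 - (ω : ℂ) ^ 2).re ≤ -ω ^ 2) := by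
  have hωk : 0 < ω ^ k := hk.pow_pos hω
  have hε2 : 0 < 2 * ε := by positivity
  refine ⟨fun hα => ?_, fun hα κ hκ => ?_⟩
  · obtain ⟨κ, hκ, hκeq⟩ := Real.exists_pos_mul_tanh_mul_eq hε2 (mul_pos hα hωk)
    refine ⟨κ, hκ, by convert hκeq using 3; ring, fun hωκ => ?_⟩
    exact Real.sqrt_pos.2 (sub_pos.2 (sq_lt_sq.2 (by rwa [abs_of_pos hκ])))
  · have hre : κ.re = 0 := by
      refine Complex.re_eq_zero_of_mul_tanh_mul_eq_neg hε2 (mul_neg_of_neg_of_pos hα hωk) ?_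
      convert hκ using 3
      push_cast
      ring
    refine ⟨hre, ?_, ?_⟩
    · simp [sq, hre]
    · simp [sq, hre, mul_self_nonneg]

/-- For the wave-equation boundary eigenvalue condition with even `k` and `α̃ = αiᵏ` real:
if `α̃ > 0` the equation `κ tanh(2κε) = α̃ωᵏ` has a positive real root `κ`, and then
`s = √(κ² − ω²)` is real and positive whenever `κ > |ω|`; if `α̃ < 0`, every complex
solution `κ` is purely imaginary, so `s² = κ² − ω²` is real with `s² ≤ −ω²`, i.e. `s`
is purely imaginary and the mode `e^{st}` does not grow. -/
theorem wave_even_perturbation_stability_dichotomy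
    (ε ω α' : ℝ) (hε : 0 < ε) (hω : ω ≠ 0) (k : ℕ) (hk : Even k) (hk0 : 0 < k) :
    (0 < α' → ∃ κ : ℝ, 0 < κ ∧ κ * Real.tanh (2 * κ * ε) = α' * ω ^ k ∧
      (|ω| < κ → 0 < Real.sqrt (κ ^ 2 - ω ^ 2))) ∧
    (α' < 0 → ∀ κ : ℂ, κ * Complex.tanh (2 * κ * ε) = ((α' * ω ^ k : ℝ) : ℂ) →
      κ.re = 0 ∧ (κ ^ 2 - (ω : ℂ) ^ 2).im = 0 ∧ (κ ^ 2 - (ω : ℂ) ^ 2).re ≤ -ω ^ 2) :=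
  wave_even_perturbation_stability_dichotomy_general ε ω α' hε hω k hk
end
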